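/- arXiv:math/0510252 — 5 statements merged into one kernel-verified Lean document; each statement's English description precedes it below -/
import Mathlib

section
/- Let λ_1(t), ..., λ_n(t) be positive real-valued functions of t ≥ 0, all bounded above by a constant C, and suppose that for every τ > 0 the function t ↦ ∏_{i=1}^n (λ_i(t) + τ) is nondecreasing. Then there is a constant c > 0 such that min_i λ_i(t) ≥ c for all t ≥ 0, provided min_i λ_i(0) > 0. -/
theorem stmt_6 (n : ℕ) (lam : Fin n → ℝ → ℝ) (C : ℝ)
    (hpos : ∀ i t, 0 ≤ t → 0 < lam i t)
    (hbdd : ∀ i t, 0 ≤ t → lam i t ≤ C)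
    (hmono : ∀ τ : ℝ, 0 < τ →
      MonotoneOn (fun t => ∏ i, (lam i t + τ)) (Set.Ici (0 : ℝ)))
    (h0 : ∀ i, 0 < lam i 0) :
    ∃ c > 0, ∀ t, 0 ≤ t → ∀ i, c ≤ lam i t := by
  rcases Nat.eq_zero_or_pos n with hn | hn
  · subst hn
    exact ⟨1, one_pos, fun t ht i => i.elim0⟩
  have i0 : Fin n := ⟨0, hn⟩
  have hC : 0 < C := lt_of_lt_of_le (hpos i0 0 le_rfl) (hbdd i0 0 le_rfl)
  set P : ℝ := ∏ i, lam i 0 with hP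
  have hPpos : 0 < P := Finset.prod_pos fun i _ => h0 i
  -- key: for all t ≥ 0, P ≤ ∏ λ_i(t)
  have key : ∀ t, 0 ≤ t → P ≤ ∏ i, lam i t := by
    intro t ht
    have htend : Filter.Tendsto (fun τ : ℝ => ∏ i, (lam i t + τ))
        (nhdsWithin 0 (Set.Ioi 0)) (nhds (∏ i, lam i t)) := by
      have hcont : Continuous (fun τ : ℝ => ∏ i, (lam i t + τ)) := by
        continuity
      have := hcont.tendsto 0
      simp only [add_zero] at this
      exact this.mono_left nhdsWithin_le_nhds
    refine ge_of_tendsto htend ?_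
    filter_upwards [self_mem_nhdsWithin] with τ (hτ : 0 < τ)
    have h1 : ∏ i, (lam i 0 + τ) ≤ ∏ i, (lam i t + τ) :=
      hmono τ hτ (Set.self_mem_Ici) ht ht
    refine le_trans ?_ h1
    apply Finset.prod_le_prod
    · intro i _; exact (h0 i).le
    · intro i _; linarith [hτ]
  refine ⟨P / C ^ (n - 1), div_pos hPpos (pow_pos hC _), ?_⟩
  intro t ht i
  rw [div_le_iff₀ (pow_pos hC _)]
  have h2 : ∏ j ∈ Finset.univ.erase i, lam j t ≤ C ^ (n - 1) := by
    have hcard : (Finset.univ.erase i).card = n - 1 := by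
      rw [Finset.card_erase_of_mem (Finset.mem_univ i), Finset.card_univ,
        Fintype.card_fin]
    calc ∏ j ∈ Finset.univ.erase i, lam j t
        ≤ ∏ _j ∈ Finset.univ.erase i, C := by
          apply Finset.prod_le_prod
          · intro j _; exact (hpos j t ht).le
          · intro j _; exact hbdd j t ht
      _ = C ^ (n - 1) := by rw [Finset.prod_const, hcard]
  calc P ≤ ∏ j, lam j t := key t ht
    _ = lam i t * ∏ j ∈ Finset.univ.erase i, lam j t :=
        (Finset.mul_prod_erase _ _ (Finset.mem_univ i)).symm
    _ ≤ lam i t * C ^ (n - 1) := by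
        apply mul_le_mul_of_nonneg_left h2 (hpos i t ht).le
end

section
/- Let φ : D(r) → M be a local homeomorphism from the Euclidean ball D(r) ⊂ ℂⁿ to a metric space M, and suppose there is C > 0 such that for every path γ̃ in D(r/2), the length of φ∘γ̃ in M is at least C⁻¹ times the Euclidean length of γ̃. Let γ : [0,1] → M be a path with γ(0) = φ(z) for some z ∈ D(r/8), and suppose the length of γ is less than r/(4C). Then γ admits a unique lift γ̃ : [0,1] → D(r/2) with φ∘γ̃ = γ and γ̃(0) = z. -/
/-!
Lifts through a local homeomorphism are unique, since the set where two lifts agree is clopen.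
For existence, let `S` be the set of times `t` such that `γ` lifts on `[0, t]`. The length
comparison bounds the displacement of every partial lift by `C · length γ < r / 4`, so partial
lifts stay in the compact ball `closedBall z (r / 4) ⊆ D(r / 2)`. If `T ∈ closure S`, a cluster
point `p` of the endpoints of partial lifts at times near `T` lies over `γ T`; a chart of `φ` at
`p` then continues a partial lift whose endpoint lies in its source to all times near `T`. Hence
`S` is clopen in `[0, 1]`, and `1 ∈ S`.
-/

open Metric unitInterval Set Filter Topology

namespace PathLifting

variable {α : Type*}

/-- Partial lifts on `[0, t]` are encoded as lifts of the stopped path, so that they are again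
maps on all of `I`, as the length hypothesis requires. -/
def stopAt (γ : I → α) (t : I) : I → α := fun s => γ (min s t)

lemma stopAt_stopAt_of_le (γ : I → α) {t t' : I} (h : t' ≤ t) :
    stopAt (stopAt γ t) t' = stopAt γ t' := by
  funext s
  simp only [stopAt, min_assoc, min_eq_left h]

lemma stopAt_one (γ : I → α) : stopAt γ 1 = γ :=
  funext fun s => congrArg γ (min_eq_left s.2.2)

lemma stopAt_apply_self (γ : I → α) (t : I) : stopAt γ t t = γ t :=
  congrArg γ (min_self t)

lemma stopAt_apply_of_le (γ : I → α) {s t : I} (h : s ≤ t) : stopAt γ t s = γ s :=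
  congrArg γ (min_eq_left h)

lemma eVariationOn_stopAt_le [PseudoEMetricSpace α] (γ : I → α) (t : I) :
    eVariationOn (stopAt γ t) univ ≤ eVariationOn γ univ :=
  eVariationOn.comp_le_of_monotoneOn γ _ ((monotone_id.min monotone_const).monotoneOn _)
    (mapsTo_univ _ _)

section Topological

variable {X M : Type*} [TopologicalSpace X]

structure IsLift (φ : X → M) (U : Set X) (x₀ : X) (γ : I → M) (c : I → X) : Prop where
  continuous : Continuous c
  mem : ∀ s, c s ∈ U
  comp_eq : φ ∘ c = γ
  apply_zero : c 0 = x₀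

variable {φ : X → M} {U : Set X} {x₀ : X} {γ : I → M} {c : I → X}

lemma isLift_stopAt (hc : IsLift φ U x₀ γ c) (t : I) :
    IsLift φ U x₀ (stopAt γ t) (stopAt c t) :=
  ⟨hc.continuous.comp (continuous_id.min continuous_const), fun _ => hc.mem _,
    by rw [← hc.comp_eq]; rfl, (stopAt_apply_of_le c (nonneg' : 0 ≤ t)).trans hc.apply_zero⟩

variable [TopologicalSpace M]

lemma IsLift.eq [T2Space X] (hloc : IsLocalHomeomorphOn φ U) {c' : I → X}
    (hc : IsLift φ U x₀ γ c) (hc' : IsLift φ U x₀ γ c') : c = c' := by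
  have hinj : IsLocallyInjective (U.domRestrict φ) := fun x => by
    obtain ⟨e, hxe, rfl⟩ := hloc x x.2
    exact ⟨(Subtype.val : U → X) ⁻¹' e.source,
      e.open_source.preimage continuous_subtype_val, hxe,
      fun a ha b hb hab => Subtype.ext (e.injOn ha hb hab)⟩
  have := (T2Space.isSeparatedMap _).eq_of_comp_eq hinj (hc.continuous.codRestrict hc.mem)
    (hc'.continuous.codRestrict hc'.mem) (hc.comp_eq.trans hc'.comp_eq.symm) 0
    (Subtype.ext (hc.apply_zero.trans hc'.apply_zero.symm))
  exact funext fun s => congrArg Subtype.val (congrFun this s)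

lemma _root_.IsLocalHomeomorphOn.exists_chart_subset (hloc : IsLocalHomeomorphOn φ U) {x : X}
    (hx : x ∈ U) {V : Set X} (hV : IsOpen V) (hxV : x ∈ V) :
    ∃ e : OpenPartialHomeomorph X M,
      x ∈ e.source ∧ e.source ⊆ V ∧ EqOn φ e e.source := by
  obtain ⟨e, hxe, rfl⟩ := hloc x hx
  refine ⟨e.restrOpen V hV, ?_, ?_, fun _ _ => rfl⟩ <;>
    simp only [OpenPartialHomeomorph.restrOpen_source]
  exacts [⟨hxe, hxV⟩, inter_subset_right]

lemma IsLift.glue {t t' : I} {e : OpenPartialHomeomorph X M}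
    (hc : IsLift φ U x₀ (stopAt γ t) c) (hγ : Continuous γ) (heU : e.source ⊆ U)
    (hφe : EqOn φ e e.source) (hct : c t ∈ e.source) (htt' : t ≤ t')
    (hγe : MapsTo γ (Icc t t') e.target) :
    ∃ c', IsLift φ U x₀ (stopAt γ t') c' := by
  classical
  have hφc : ∀ s ≤ t, φ (c s) = γ s := fun s hs =>
    (congrFun hc.comp_eq s).trans (stopAt_apply_of_le γ hs)
  have hjoin : c t = e.symm (γ t) := by
    rw [← hφc t le_rfl, hφe hct, e.left_inv hct]
  have hmaps : ∀ s, t ≤ s → γ (min s t') ∈ e.target := fun s hs =>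
    hγe ⟨le_min hs htt', min_le_right _ _⟩
  refine ⟨fun s => if s ≤ t then c s else e.symm (γ (min s t')), ?_, fun s => ?_, ?_, ?_⟩
  · refine continuous_if_le continuous_id continuous_const hc.continuous.continuousOn
      (e.continuousOn_symm.comp (hγ.comp (continuous_id.min continuous_const)).continuousOn
        hmaps) fun s (hs : s = t) => ?_
    rw [hs, min_eq_left htt', hjoin]
  · split_ifs with hs
    exacts [hc.mem s, heU (e.map_target (hmaps s (le_of_not_ge hs)))]
  · funext s
    simp only [Function.comp_apply]
    split_ifs with hs
    · rw [hφc s hs, stopAt_apply_of_le γ (hs.trans htt')]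
    · rw [hφe (e.map_target (hmaps s (le_of_not_ge hs))), e.right_inv (hmaps s (le_of_not_ge hs))]
      rfl
  · simp only [if_pos (nonneg' : (0 : I) ≤ t)]
    exact hc.apply_zero

def liftableTimes (φ : X → M) (U : Set X) (x₀ : X) (γ : I → M) : Set I :=
  {t | ∃ c, IsLift φ U x₀ (stopAt γ t) c}

lemma liftableTimes_mem_nhds {T : I} {e : OpenPartialHomeomorph X M} (hγ : Continuous γ)
    (heU : e.source ⊆ U) (hφe : EqOn φ e e.source) (hT : γ T ∈ e.target)
    (hfreq : ∃ᶠ t in 𝓝 T, ∃ c, IsLift φ U x₀ (stopAt γ t) c ∧ c t ∈ e.source) :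
    liftableTimes φ U x₀ γ ∈ 𝓝 T := by
  obtain ⟨a, b, -, hab, habγ⟩ := exists_Icc_mem_subset_of_mem_nhds
    (hγ.continuousAt.preimage_mem_nhds (e.open_target.mem_nhds hT))
  obtain ⟨t, ⟨c, hc, hct⟩, hat, htb⟩ := (hfreq.and_eventually hab).exists
  refine mem_of_superset hab fun t' ⟨hat', ht'b⟩ => ?_
  rcases le_total t' t with h | h
  · exact ⟨_, stopAt_stopAt_of_le γ h ▸ isLift_stopAt hc t'⟩
  · exact hc.glue hγ heU hφe hct h fun s hs => habγ ⟨hat.trans hs.1, hs.2.trans ht'b⟩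

lemma exists_chart_frequently_of_mem_closure [T2Space M] (hloc : IsLocalHomeomorphOn φ U)
    (hU : IsOpen U) (hγ : Continuous γ) {K : Set X} (hK : IsCompact K) (hKU : K ⊆ U)
    (hbound : ∀ t c, IsLift φ U x₀ (stopAt γ t) c → c t ∈ K) {T : I}
    (hT : T ∈ closure (liftableTimes φ U x₀ γ)) :
    ∃ e : OpenPartialHomeomorph X M,
      e.source ⊆ U ∧ EqOn φ e e.source ∧ γ T ∈ e.target ∧
      ∃ᶠ t in 𝓝 T, ∃ c, IsLift φ U x₀ (stopAt γ t) c ∧ c t ∈ e.source := by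
  have : Nonempty X := ⟨x₀⟩
  choose! L hL using fun t (ht : t ∈ liftableTimes φ U x₀ γ) => ht
  set F := 𝓝[liftableTimes φ U x₀ γ] T
  have : F.NeBot := mem_closure_iff_nhdsWithin_neBot.mp hT
  have hS : ∀ᶠ t in F, t ∈ liftableTimes φ U x₀ γ := self_mem_nhdsWithin
  obtain ⟨p, hpK, hp⟩ := hK (f := map (fun t => L t t) F)
    (le_principal_iff.2 (hS.mono fun t ht => hbound t _ (hL t ht)))
  obtain ⟨e, hpe, heU, hφe⟩ := hloc.exists_chart_subset (hKU hpK) hU (hKU hpK)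
  have hφp : φ p = γ T := by
    have hlim : Tendsto (φ ∘ fun t => L t t) F (𝓝 (γ T)) :=
      (hγ.continuousAt.tendsto.mono_left nhdsWithin_le_nhds).congr' <| hS.mono fun t ht =>
        ((congrFun (hL t ht).comp_eq t).trans (stopAt_apply_self γ t)).symm
    exact eq_of_nhds_neBot (hp.map (hloc.continuousAt (hKU hpK)) hlim).neBot
  refine ⟨e, heU, hφe, hφp ▸ hφe hpe ▸ e.map_source hpe, ?_⟩
  exact ((frequently_map.mp (hp.frequently (e.open_source.mem_nhds hpe))).and_eventually hS |>.mono
    fun t h => ⟨L t, hL t h.2, h.1⟩).filter_mono nhdsWithin_le_nhds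

theorem exists_isLift [T2Space M] (hloc : IsLocalHomeomorphOn φ U) (hU : IsOpen U)
    (hγ : Continuous γ) {K : Set X} (hK : IsCompact K) (hKU : K ⊆ U)
    (hbound : ∀ t c, IsLift φ U x₀ (stopAt γ t) c → c t ∈ K) (hx₀ : x₀ ∈ U)
    (h0 : γ 0 = φ x₀) : ∃ c, IsLift φ U x₀ γ c := by
  set S := liftableTimes φ U x₀ γ
  have hnhds : ∀ T ∈ closure S, S ∈ 𝓝 T := fun T hT => by
    obtain ⟨e, heU, hφe, hTe, hfreq⟩ :=
      exists_chart_frequently_of_mem_closure hloc hU hγ hK hKU hbound hT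
    exact liftableTimes_mem_nhds hγ heU hφe hTe hfreq
  have hclopen : IsClopen S :=
    ⟨closure_subset_iff_isClosed.1 fun T hT => mem_of_mem_nhds (hnhds T hT),
      isOpen_iff_mem_nhds.2 fun T hT => hnhds T (subset_closure hT)⟩
  have h0S : (0 : I) ∈ S := ⟨fun _ => x₀, ⟨continuous_const, fun _ => hx₀,
    funext fun s => h0.symm.trans (congrArg γ (min_eq_right nonneg').symm), rfl⟩⟩
  obtain ⟨c, hc⟩ : (1 : I) ∈ S := hclopen.eq_univ ⟨0, h0S⟩ ▸ mem_univ 1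
  exact ⟨c, stopAt_one γ ▸ hc⟩

end Topological

lemma edist_le_of_isLift {X M : Type*} [PseudoEMetricSpace X] [PseudoEMetricSpace M]
    {φ : X → M} {U : Set X} {x₀ : X} {γ : I → M} {c : I → X} {C : ℝ} (hC : 0 < C)
    (hlen : ∀ c : I → X, Continuous c → (∀ s, c s ∈ U) →
      ENNReal.ofReal C⁻¹ * eVariationOn c univ ≤ eVariationOn (φ ∘ c) univ)
    (hc : IsLift φ U x₀ γ c) (s : I) :
    edist (c s) x₀ ≤ ENNReal.ofReal C * eVariationOn γ univ :=
  calc edist (c s) x₀ = edist (c s) (c 0) := by rw [hc.apply_zero]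
    _ ≤ eVariationOn c univ := eVariationOn.edist_le c (mem_univ s) (mem_univ 0)
    _ = ENNReal.ofReal C * (ENNReal.ofReal C⁻¹ * eVariationOn c univ) := by
      rw [← mul_assoc, ← ENNReal.ofReal_mul hC.le, mul_inv_cancel₀ hC.ne', ENNReal.ofReal_one,
        one_mul]
    _ ≤ ENNReal.ofReal C * eVariationOn γ univ := by
      rw [← hc.comp_eq]
      gcongr
      exact hlen c hc.continuous hc.mem

end PathLifting

open PathLifting in
theorem stmt_9 (n : ℕ) {M : Type*} [MetricSpace M]
    (r C : ℝ) (hr : 0 < r) (hC : 0 < C)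
    (φ : EuclideanSpace ℂ (Fin n) → M)
    (hloc : IsLocalHomeomorphOn φ (ball 0 r))
    -- φ does not shrink lengths by more than a factor C
    (hlen : ∀ c : unitInterval → EuclideanSpace ℂ (Fin n), Continuous c →
      (∀ s, c s ∈ ball (0 : EuclideanSpace ℂ (Fin n)) (r / 2)) →
      ENNReal.ofReal C⁻¹ * eVariationOn c Set.univ ≤
        eVariationOn (φ ∘ c) Set.univ)
    (γ : unitInterval → M) (hγ : Continuous γ)
    (z : EuclideanSpace ℂ (Fin n)) (hz : z ∈ ball (0 : EuclideanSpace ℂ (Fin n)) (r / 8))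
    (hstart : γ 0 = φ z)
    (hshort : eVariationOn γ Set.univ < ENNReal.ofReal (r / (4 * C))) :
    ∃! c : unitInterval → EuclideanSpace ℂ (Fin n),
      Continuous c ∧ (∀ s, c s ∈ ball (0 : EuclideanSpace ℂ (Fin n)) (r / 2)) ∧
      φ ∘ c = γ ∧ c 0 = z := by
  have hloc' : IsLocalHomeomorphOn φ (ball 0 (r / 2)) := hloc.mono (ball_subset_ball (by linarith))
  have hKB : closedBall z (r / 4) ⊆ ball 0 (r / 2) :=
    closedBall_subset_ball' (by rw [mem_ball] at hz; linarith)
  have hbound : ∀ t c, IsLift φ (ball 0 (r / 2)) z (stopAt γ t) c →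
      c t ∈ closedBall z (r / 4) := by
    intro t c hc
    rw [mem_closedBall, ← edist_le_ofReal (by positivity)]
    calc edist (c t) z ≤ ENNReal.ofReal C * eVariationOn (stopAt γ t) univ :=
          edist_le_of_isLift hC hlen hc t
      _ ≤ ENNReal.ofReal C * ENNReal.ofReal (r / (4 * C)) := by
          gcongr
          exact (eVariationOn_stopAt_le γ t).trans hshort.le
      _ = ENNReal.ofReal (r / 4) := by
          rw [← ENNReal.ofReal_mul hC.le]
          congr 1
          field_simp
  obtain ⟨c, hc⟩ := exists_isLift hloc' isOpen_ball hγ (isCompact_closedBall z _) hKB hbound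
    (hKB (mem_closedBall_self (by positivity))) hstart
  exact ⟨c, ⟨hc.continuous, hc.mem, hc.comp_eq, hc.apply_zero⟩,
    fun c' h => IsLift.eq hloc' ⟨h.1, h.2.1, h.2.2.1, h.2.2.2⟩ hc⟩
end

section
/- Let φ : X → Y be a local homeomorphism between metric spaces that is 'uniformly expanding at scale σ': there exist σ > 0 and C₁ > 0 such that for every x in a compact set K ⊂ X, φ restricted to the ball B(x,σ) is a homeomorphism onto its image, the image contains B(φ(x), C₁⁻¹σ), and d_X(x, x') ≤ C₁ d_Y(φ(x), φ(x')) for all x' ∈ B(x, σ). Let γ̃, β̃ : [0,1] → K be continuous with γ̃(0) = β̃(0), φ∘γ̃ = γ and φ∘β̃ = β. If d_Y(γ(τ), β(τ)) < C₁⁻¹ε for all τ, where 0 < ε < σ, then d_X(γ̃(τ), β̃(τ)) < ε for all τ ∈ [0,1]. -/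
open Metric unitInterval

theorem stmt_10 {X Y : Type*} [MetricSpace X] [MetricSpace Y]
    (φ : X → Y) (hφ : IsLocalHomeomorph φ)
    (K : Set X) (hK : IsCompact K)
    (sig C₁ : ℝ) (hsig : 0 < sig) (hC₁ : 0 < C₁)
    -- uniform expansion at scale sig on K
    (hinj : ∀ x ∈ K, Set.InjOn φ (ball x sig))
    (himg : ∀ x ∈ K, ball (φ x) (C₁⁻¹ * sig) ⊆ φ '' ball x sig)
    (hexp : ∀ x ∈ K, ∀ x' ∈ ball x sig, dist x x' ≤ C₁ * dist (φ x) (φ x'))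
    (γt βt : unitInterval → X) (hγt : Continuous γt) (hβt : Continuous βt)
    (hγK : ∀ τ, γt τ ∈ K) (hβK : ∀ τ, βt τ ∈ K)
    (hsame : γt 0 = βt 0)
    (γ β : unitInterval → Y) (hγ : φ ∘ γt = γ) (hβ : φ ∘ βt = β)
    (ε : ℝ) (hε : 0 < ε) (hεσ : ε < sig)
    (hclose : ∀ τ, dist (γ τ) (β τ) < C₁⁻¹ * ε) :
    ∀ τ, dist (γt τ) (βt τ) < ε := by
  set f : unitInterval → ℝ := fun t => dist (γt t) (βt t) with hf_def
  have hf : Continuous f := hγt.dist hβt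
  have key : ∀ t, f t < sig → f t < ε := by
    intro t ht
    have hball : βt t ∈ ball (γt t) sig := by
      simpa [mem_ball, dist_comm] using ht
    have h1 := hexp (γt t) (hγK t) (βt t) hball
    have h2 : (fun τ => φ (γt τ)) t = γ t := congrFun hγ t
    have h3 : (fun τ => φ (βt τ)) t = β t := congrFun hβ t
    calc f t ≤ C₁ * dist (φ (γt t)) (φ (βt t)) := h1
      _ = C₁ * dist (γ t) (β t) := by simp only at h2 h3; rw [h2, h3]
      _ < C₁ * (C₁⁻¹ * ε) := by gcongr; exact hclose t
      _ = ε := by field_simp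
  have hset : {t | f t < ε} = {t | f t ≤ ε} := by
    apply subset_antisymm (fun t (ht : f t < ε) => le_of_lt ht)
    intro t ht
    exact key t (lt_of_le_of_lt ht hεσ)
  have hclopen : IsClopen {t | f t < ε} := by
    constructor
    · rw [hset]; exact isClosed_le hf continuous_const
    · exact isOpen_lt hf continuous_const
  have h0 : (0 : unitInterval) ∈ {t | f t < ε} := by
    simp only [Set.mem_setOf_eq, hf_def, hsame, dist_self]
    exact hε
  have := hclopen.eq_univ ⟨0, h0⟩
  intro τ
  have : τ ∈ {t | f t < ε} := this ▸ Set.mem_univ τ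
  exact this
end

section
/- Let M be a simply connected topological space, φ : D → M a local homeomorphism from a metric space D, and suppose path-lifting holds in the following uniform sense: there is ρ₁ > 0 such that any path α in M starting at q = φ(w) of length < ρ₁ admits a unique lift starting at w. Let γ be a loop in M of length < ρ₁ based at q, and let γ̃ be a lift of γ with γ̃(0) = w₁ and γ̃(1) = w₂, and suppose all loops in a homotopy α(s,·) from γ to the constant loop at q have length < ρ₁ and admit lifts depending continuously on s (in the sense that lifts of uniformly close curves with the same start point have uniformly close endpoints, and endpoints mapping to q in an injectivity ball must coincide). Then w₁ = w₂. -/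
open unitInterval

theorem stmt_13 {M D : Type*} [MetricSpace M] [SimplyConnectedSpace M]
    [MetricSpace D]
    (φ : D → M) (hφ : IsLocalHomeomorph φ)
    (ρ₁ : ℝ) (hρ₁ : 0 < ρ₁)
    -- uniform unique path lifting for short paths
    (hlift : ∀ w : D, ∀ α : unitInterval → M, Continuous α → α 0 = φ w →
      eVariationOn α Set.univ < ENNReal.ofReal ρ₁ →
      ∃! c : unitInterval → D, Continuous c ∧ φ ∘ c = α ∧ c 0 = w)
    (q : M) (w₁ w₂ : D) (hq : φ w₁ = q)
    -- the short loop γ at q and its lift γ̃ from w₁ to w₂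
    (γ : unitInterval → M) (hγ : Continuous γ)
    (hγ0 : γ 0 = q) (hγ1 : γ 1 = q)
    (hγshort : eVariationOn γ Set.univ < ENNReal.ofReal ρ₁)
    (γt : unitInterval → D) (hγt : Continuous γt)
    (hγtlift : φ ∘ γt = γ) (hγt0 : γt 0 = w₁) (hγt1 : γt 1 = w₂)
    -- a homotopy of short loops from γ to the constant loop at q
    (H : unitInterval → unitInterval → M)
    (hHcont : Continuous fun p : unitInterval × unitInterval => H p.1 p.2)
    (hH0 : H 0 = γ) (hH1 : H 1 = fun _ => q)
    (hHends : ∀ s, H s 0 = q ∧ H s 1 = q)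
    (hHshort : ∀ s, eVariationOn (H s) Set.univ < ENNReal.ofReal ρ₁)
    -- lifts of the homotopy depending continuously on s
    (β : unitInterval → unitInterval → D)
    (hβ : ∀ s, Continuous (β s) ∧ φ ∘ β s = H s ∧ β s 0 = w₁)
    (hβcont : Continuous fun s => β s 1)
    -- local injectivity of φ near the fiber over q: the fiber is discrete
    (hdisc : DiscreteTopology ↥(φ ⁻¹' {q})) :
    w₁ = w₂ := by
  -- endpoints of the lifts lie in the fiber over q
  have hfib : ∀ s, β s 1 ∈ φ ⁻¹' {q} := by
    intro s
    have h := congrFun (hβ s).2.1 1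
    simp only [Function.comp_apply] at h
    simp [Set.mem_preimage, h, (hHends s).2]
  -- the map s ↦ β s 1 into the discrete fiber is continuous, hence constant
  let f : unitInterval → ↥(φ ⁻¹' {q}) := fun s => ⟨β s 1, hfib s⟩
  have hfcont : Continuous f := Continuous.subtype_mk hβcont _
  have hconst : f 0 = f 1 := PreconnectedSpace.constant inferInstance hfcont
  have h01 : β 0 1 = β 1 1 := congrArg Subtype.val hconst
  -- β 0 = γt by uniqueness of lifts of γ
  have hγ0' : γ 0 = φ w₁ := by rw [hγ0, hq]
  obtain ⟨c, _, hcuniq⟩ := hlift w₁ γ hγ hγ0' hγshort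
  have hβ0 : β 0 = c := by
    apply hcuniq
    refine ⟨(hβ 0).1, ?_, (hβ 0).2.2⟩
    rw [(hβ 0).2.1, hH0]
  have hγtc : γt = c := hcuniq _ ⟨hγt, hγtlift, hγt0⟩
  -- β 1 = const w₁ by uniqueness of lifts of the constant loop
  have hH1cont : Continuous (H 1) := by rw [hH1]; exact continuous_const
  have hH1start : H 1 0 = φ w₁ := by rw [hH1, hq]
  obtain ⟨c', _, hcuniq'⟩ := hlift w₁ (H 1) hH1cont hH1start (hHshort 1)
  have hβ1 : β 1 = c' := hcuniq' _ ⟨(hβ 1).1, (hβ 1).2.1, (hβ 1).2.2⟩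
  have hconst1 : (fun _ : unitInterval => w₁) = c' := by
    apply hcuniq'
    refine ⟨continuous_const, ?_, rfl⟩
    funext t; simp [hH1, hq]
  calc w₁ = c' 1 := congrFun hconst1 1
    _ = β 1 1 := (congrFun hβ1 1).symm
    _ = β 0 1 := h01.symm
    _ = c 1 := congrFun hβ0 1
    _ = γt 1 := (congrFun hγtc 1).symm
    _ = w₂ := hγt1
end

section
/- Let τ > 0 and let P(t) = Ric(t) + τ·g(t) along a solution of the Kähler-Ricci flow ∂g/∂t = −Ric on a Kähler manifold with nonnegative holomorphic bisectional curvature, satisfying Cao's Harnack estimate ∂R_{ij̄}/∂t + g^{kl̄}R_{il̄}R_{kj̄} ≥ 0 (as Hermitian forms). Then at each point, working in a unitary frame where g_{ij̄} = δ_{ij} and R_{ij̄} = λ_i δ_{ij}, one has ∂/∂t log( det P / det g ) ≥ Σ_i ( −λ_i²/(λ_i+τ) − τ + τ²/(λ_i+τ) + λ_i ) = 0, so det(Ric+τg)/det(g) is nondecreasing in t. -/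
/-!
Put `P = Ric + τ g`. By Jacobi's formula and `g' = -Ric`,
`(log (det P / det g))' = tr (P⁻¹ (Ric' - τ Ric)) + tr (g⁻¹ Ric)`.
Since `Ric g⁻¹ Ric = Ric g⁻¹ P - τ Ric` and `tr (P⁻¹ Ric g⁻¹ P) = tr (g⁻¹ Ric)`, this equals
`tr (P⁻¹ Z)` for the Harnack matrix `Z = Ric' + Ric g⁻¹ Ric ≥ 0`. As `P⁻¹ > 0`, the trace of the
product of the two positive semidefinite matrices is nonnegative, and so is the derivative of the
positive real `det P / det g`.
-/

open Matrix
open scoped ComplexOrder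

namespace Matrix

section Jacobi

variable {𝕜 𝔸 n : Type*} [NontriviallyNormedField 𝕜] [NormedCommRing 𝔸] [NormedAlgebra 𝕜 𝔸]
  [Fintype n] [DecidableEq n] {A : 𝕜 → Matrix n n 𝔸} {A' : Matrix n n 𝔸} {t : 𝕜}

theorem hasDerivAt_det_sum_updateCol (h : ∀ i j, HasDerivAt (fun s => A s i j) (A' i j) t) :
    HasDerivAt (fun s => (A s).det) (∑ i, ((A t).updateCol i fun k => A' k i).det) t := by
  have hsum := HasDerivAt.fun_sum (u := Finset.univ) fun (σ : Equiv.Perm n) _ =>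
    (HasDerivAt.fun_finsetProd (u := Finset.univ) fun i _ => h (σ i) i).const_mul
      ((Equiv.Perm.sign σ : ℤ) : 𝔸)
  simp only [det_apply']
  refine hsum.congr_deriv ?_
  simp only [updateCol_apply]
  rw [Finset.sum_comm]
  refine Finset.sum_congr rfl fun σ _ => ?_
  rw [Finset.mul_sum]
  refine Finset.sum_congr rfl fun i _ => ?_
  rw [← Finset.mul_prod_erase _ _ (Finset.mem_univ i), if_pos rfl,
    Finset.prod_congr rfl fun j hj => if_neg (Finset.ne_of_mem_erase hj), smul_eq_mul]
  ring

theorem hasDerivAt_det (h : ∀ i j, HasDerivAt (fun s => A s i j) (A' i j) t) :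
    HasDerivAt (fun s => (A s).det) ((A t).adjugate * A').trace t := by
  convert hasDerivAt_det_sum_updateCol h using 1
  simp only [← cramer_apply, cramer_eq_adjugate_mulVec, trace, diag, mul_apply, mulVec,
    dotProduct]

end Jacobi

theorem adjugate_eq_det_smul_inv {α n : Type*} [CommRing α] [Fintype n] [DecidableEq n]
    {A : Matrix n n α} (h : IsUnit A.det) : A.adjugate = A.det • A⁻¹ := by
  rw [inv_def, smul_smul, Ring.mul_inverse_cancel _ h, one_smul]

theorem hasDerivAt_det_div_det {𝕜 𝔽 n : Type*} [NontriviallyNormedField 𝕜]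
    [NontriviallyNormedField 𝔽] [NormedAlgebra 𝕜 𝔽] [Fintype n] [DecidableEq n]
    {A B : 𝕜 → Matrix n n 𝔽} {A' B' : Matrix n n 𝔽} {t : 𝕜}
    (hA : ∀ i j, HasDerivAt (fun s => A s i j) (A' i j) t)
    (hB : ∀ i j, HasDerivAt (fun s => B s i j) (B' i j) t)
    (hAt : (A t).det ≠ 0) (hBt : (B t).det ≠ 0) :
    HasDerivAt (fun s => (A s).det / (B s).det)
      ((A t).det / (B t).det * ((A t)⁻¹ * A' - (B t)⁻¹ * B').trace) t := by
  refine ((hasDerivAt_det hA).fun_div (hasDerivAt_det hB) hBt).congr_deriv ?_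
  rw [adjugate_eq_det_smul_inv hAt.isUnit, adjugate_eq_det_smul_inv hBt.isUnit, trace_sub,
    smul_mul, smul_mul, trace_smul, trace_smul, smul_eq_mul, smul_eq_mul]
  field_simp

theorem trace_inv_add_smul_mul_harnack {α n : Type*} [CommRing α] [Fintype n] [DecidableEq n]
    {g R R' : Matrix n n α} (c : α) (hg : IsUnit g.det) (hP : IsUnit (R + c • g).det) :
    ((R + c • g)⁻¹ * (R' + R * g⁻¹ * R)).trace
      = ((R + c • g)⁻¹ * (R' - c • R) - g⁻¹ * -R).trace := by
  set P := R + c • g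
  have hRgP : R * g⁻¹ * R = R * g⁻¹ * P - c • R := by
    rw [mul_add, mul_smul_comm, Matrix.mul_assoc R g⁻¹ g, nonsing_inv_mul _ hg, Matrix.mul_one,
      add_sub_cancel_right]
  have hconj : (P⁻¹ * (R * g⁻¹ * P)).trace = (g⁻¹ * R).trace := by
    rw [trace_mul_comm, Matrix.mul_assoc, mul_nonsing_inv _ hP, Matrix.mul_one, trace_mul_comm]
  rw [hRgP, ← add_sub_assoc, add_sub_right_comm, Matrix.mul_add, trace_add, hconj, Matrix.mul_neg,
    sub_neg_eq_add, trace_add]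

open scoped MatrixOrder in
theorem PosSemidef.trace_mul_nonneg {𝕜 n : Type*} [RCLike 𝕜] [Fintype n] {A B : Matrix n n 𝕜}
    (hA : A.PosSemidef) (hB : B.PosSemidef) : 0 ≤ (A * B).trace := by
  classical
  obtain ⟨C, rfl⟩ := CStarAlgebra.nonneg_iff_eq_star_mul_self.mp hA.nonneg
  rw [star_eq_conjTranspose, Matrix.mul_assoc, trace_mul_comm]
  exact (hB.mul_mul_conjTranspose_same C).trace_nonneg

end Matrix

theorem Complex.div_re_of_pos {z w : ℂ} (hw : 0 < w) : (z / w).re = z.re / w.re := by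
  have hw_real : w = (w.re : ℂ) := Complex.eq_re_of_ofReal_le (r := 0) (by exact_mod_cast hw.le)
  rw [hw_real, Complex.div_ofReal_re, Complex.ofReal_re]

theorem stmt_15 (n : ℕ) (τ : ℝ) (hτ : 0 < τ)
    (g R R' : ℝ → Matrix (Fin n) (Fin n) ℂ)
    -- g(t) and Ric(t) are Hermitian positive definite
    (hg : ∀ t, (g t).PosDef) (hR : ∀ t, (R t).PosDef)
    -- the Kähler-Ricci flow: ∂g/∂t = -Ric (entrywise derivatives)
    (hflow : ∀ t, ∀ i j : Fin n, HasDerivAt (fun s => g s i j) (-(R t i j)) t)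
    -- R' is the time derivative of Ric (entrywise)
    (hR' : ∀ t, ∀ i j : Fin n, HasDerivAt (fun s => R s i j) (R' t i j) t)
    -- Cao's Harnack estimate: ∂Ric/∂t + Ric·g⁻¹·Ric ≥ 0 as Hermitian forms
    (hHarnack : ∀ t, (R' t + R t * (g t)⁻¹ * R t).PosSemidef) :
    Monotone (fun t => ((R t + (τ : ℂ) • g t).det.re) / ((g t).det.re)) := by
  set P : ℝ → Matrix (Fin n) (Fin n) ℂ := fun t => R t + (τ : ℂ) • g t with hP_def
  have hP : ∀ t, (P t).PosDef := fun t =>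
    (hR t).add ((hg t).smul (by exact_mod_cast hτ : (0 : ℂ) < τ))
  set F : ℝ → ℂ := fun t => (P t).det / (g t).det
  have hF : ∀ t, HasDerivAt F (F t * ((P t)⁻¹ * (R' t + R t * (g t)⁻¹ * R t)).trace) t := by
    intro t
    have hP' : ∀ i j, HasDerivAt (fun s => P s i j) ((R' t - (τ : ℂ) • R t) i j) t :=
      fun i j => by
        simpa [hP_def, sub_eq_add_neg] using
          (hR' t i j).fun_add ((hflow t i j).const_mul (τ : ℂ))
    rw [trace_inv_add_smul_mul_harnack _ (hg t).det_pos.ne'.isUnit (hP t).det_pos.ne'.isUnit]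
    exact hasDerivAt_det_div_det hP' (hflow t) (hP t).det_pos.ne' (hg t).det_pos.ne'
  have hF'_nonneg : ∀ t, 0 ≤ F t * ((P t)⁻¹ * (R' t + R t * (g t)⁻¹ * R t)).trace := fun t =>
    mul_nonneg (div_pos (hP t).det_pos (hg t).det_pos).le
      ((hP t).inv.posSemidef.trace_mul_nonneg (hHarnack t))
  have hF_re : (fun t => (P t).det.re / (g t).det.re) = fun t => (F t).re :=
    funext fun t => (Complex.div_re_of_pos (hg t).det_pos).symm
  rw [hF_re]
  exact monotone_of_hasDerivAt_nonneg
    (fun t => Complex.reCLM.hasFDerivAt.comp_hasDerivAt t (hF t))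
    fun t => (Complex.nonneg_iff.mp (hF'_nonneg t)).1
end
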